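/- arXiv:1802.03556 — 4 statements merged into one kernel-verified Lean document; each statement's English description precedes it below -/
import Mathlib

section
/- A finite group is an Iwasawa group (every subgroup is permutable) if and only if it is nilpotent and modular (its subgroup lattice is modular). -/
open Subgroup Pointwise

def Permutable {G : Type*} [Group G] (H : Subgroup G) : Prop :=
  ∀ K : Subgroup G, (H : Set G) * (K : Set G) = (K : Set G) * (H : Set G)

def IsIwasawa (G : Type*) [Group G] : Prop :=
  ∀ H : Subgroup G, Permutable H

def IsMinimalNonIwasawa (G : Type*) [Group G] : Prop :=
  ¬ IsIwasawa G ∧ ∀ H : Subgroup G, H ≠ ⊤ → IsIwasawa H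

def IsMinimalNonModular (G : Type*) [Group G] : Prop :=
  ¬ IsModularLattice (Subgroup G) ∧ ∀ H : Subgroup G, H ≠ ⊤ → IsModularLattice (Subgroup H)

def IsSchmidt (G : Type*) [Group G] : Prop :=
  ¬ Group.IsNilpotent G ∧ ∀ H : Subgroup G, H ≠ ⊤ → Group.IsNilpotent H

/-! If `H` and `K` permute then `H ⊔ K` is the set `HK`. In an Iwasawa group this turns
Dedekind's law `A(B ⊓ C) = AB ∩ C` (for `A ≤ C`) into modularity, and it shows that a Sylow
`p`-subgroup `P` joined with another Sylow `p`-subgroup `Q` has order `|P| · |Q : Q ⊓ P|`, a power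
of `p`; by maximality `P = Q`, so every Sylow subgroup is normal and the group is nilpotent.

Conversely, let `G` be nilpotent and modular; by induction on `|G|` its proper subgroups are
Iwasawa, so `H` and `K` permute as soon as `H ⊔ K ≠ G`. If `H ⊔ K = G`, put `K` in a maximal
subgroup `M`, which is normal since `G` is nilpotent. Modularity gives `(H ⊓ M) ⊔ K = M`, which is
the set `(H ⊓ M)K` because `M` is Iwasawa, so `HK ⊇ H(H ⊓ M)K = HM = G`. -/

namespace Subgroup

variable {G : Type*} [Group G]

theorem coe_sup_eq_mul_of_mul_comm {H K : Subgroup G}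
    (hHK : (H : Set G) * K = K * H) : ((H ⊔ K : Subgroup G) : Set G) = H * K := by
  let HK : Subgroup G :=
    { carrier := H * K
      one_mem' := ⟨1, H.one_mem, 1, K.one_mem, mul_one 1⟩
      mul_mem' := fun {a b} ha hb => by
        have : (H : Set G) * K * (H * K) = H * K := by
          rw [mul_assoc, ← mul_assoc (K : Set G), ← hHK, mul_assoc, ← mul_assoc,
            coe_mul_coe, coe_mul_coe]
        exact this ▸ Set.mul_mem_mul ha hb
      inv_mem' := fun {a} ha => by
        have : ((H : Set G) * K)⁻¹ = H * K := by
          rw [_root_.mul_inv_rev, inv_coe_set, inv_coe_set, hHK]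
        exact this ▸ Set.inv_mem_inv.mpr ha }
  have : H ⊔ K = HK := le_antisymm
    (sup_le (fun h hh => ⟨h, hh, 1, K.one_mem, mul_one h⟩)
      (fun k hk => ⟨1, H.one_mem, k, hk, one_mul k⟩))
    (fun _ ⟨h, hh, k, hk, hhk⟩ => hhk ▸ mul_mem_sup hh hk)
  rw [this]
  rfl

instance isModularLattice_subgroup [IsModularLattice (Subgroup G)] (M : Subgroup G) :
    IsModularLattice (Subgroup M) := by
  refine ⟨fun {x} y {z} hxz => ?_⟩
  rw [← map_le_map_iff_of_injective M.subtype_injective, map_inf _ _ _ M.subtype_injective,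
    map_sup, map_sup, map_inf _ _ _ M.subtype_injective]
  exact sup_inf_le_assoc_of_le _ ((map_le_map_iff_of_injective M.subtype_injective).mpr hxz)

end Subgroup

section

variable {G : Type*} [Group G]

theorem IsIwasawa.isModularLattice (hG : IsIwasawa G) : IsModularLattice (Subgroup G) := by
  refine ⟨fun {x} y {z} hxz a ha => ?_⟩
  have : a ∈ (x : Set G) * ↑(y ⊓ z) := by
    rw [mul_inf_assoc x y z hxz, ← coe_sup_eq_mul_of_mul_comm (hG x y)]
    exact ha
  obtain ⟨u, hu, v, hv, rfl⟩ := this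
  exact mul_mem_sup hu hv

theorem IsPGroup.to_sup_of_mul_comm {p : ℕ} [Fact p.Prime] [Finite G] {H K : Subgroup G}
    (hH : IsPGroup p H) (hK : IsPGroup p K) (hHK : (H : Set G) * K = K * H) :
    IsPGroup p (H ⊔ K : Subgroup G) := by
  have hsmul (k : K) : k • ((1 : G) : G ⧸ H) = ((k : G) : G ⧸ H) :=
    (MulAction.Quotient.smul_coe H (k : G) 1).trans (congrArg _ (mul_one _))
  have horbit : MulAction.orbit K ((1 : G) : G ⧸ H) = (K : Set G).image (↑) := by
    ext q
    simp [MulAction.mem_orbit_iff, hsmul]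
  obtain ⟨m, hm⟩ := IsPGroup.iff_card.mp hH
  obtain ⟨n, hn⟩ := hK.card_orbit ((1 : G) : G ⧸ H)
  have hcard : Nat.card (H ⊔ K : Subgroup G) = Nat.card ((K : Set G) * (H : Set G)) := by
    rw [← SetLike.coe_sort_coe, coe_sup_eq_mul_of_mul_comm hHK, hHK]
  refine IsPGroup.iff_card.mpr ⟨m + n, ?_⟩
  rw [hcard, card_mul_eq_card_subgroup_mul_card_quotient, ← horbit, hm, hn, pow_add]

theorem Sylow.normal_of_permutable {p : ℕ} [Fact p.Prime] [Finite G] (P : Sylow p G)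
    (hP : Permutable (P : Subgroup G)) : (P : Subgroup G).Normal := by
  have heq (Q : Sylow p G) : P = Q := by
    have hPQ := P.isPGroup'.to_sup_of_mul_comm Q.isPGroup' (hP Q)
    exact Sylow.ext ((P.is_maximal' hPQ le_sup_left).symm.trans (Q.is_maximal' hPQ le_sup_right))
  have : Subsingleton (Sylow p G) := ⟨fun Q R => (heq Q).symm.trans (heq R)⟩
  exact P.normal_of_subsingleton

theorem IsIwasawa.isNilpotent [Finite G] (hG : IsIwasawa G) : Group.IsNilpotent G := by
  refine ((Group.isNilpotent_of_finite_tfae (G := G)).out 3 0).mp ?_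
  exact fun _ _ P => P.normal_of_permutable (hG P)

theorem IsIwasawa.mul_comm_of_le {M H K : Subgroup G} (hM : IsIwasawa M) (hH : H ≤ M)
    (hK : K ≤ M) : (H : Set G) * K = K * H := by
  have := congrArg (Set.image M.subtype) (hM (H.subgroupOf M) (K.subgroupOf M))
  simpa only [Set.image_mul, ← coe_map, subgroupOf_map_subtype, inf_of_le_left hH,
    inf_of_le_left hK] using this

variable [Finite G] [Group.IsNilpotent G] [IsModularLattice (Subgroup G)]

theorem mul_eq_univ_of_sup_eq_top (hproper : ∀ M : Subgroup G, M ≠ ⊤ → IsIwasawa M)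
    {H K : Subgroup G} (hHK : H ⊔ K = ⊤) : (H : Set G) * (K : Set G) = Set.univ := by
  obtain rfl | ⟨M, hM, hKM⟩ := IsCoatomic.eq_top_or_exists_le_coatom K
  · rw [coe_top, Set.mul_univ ⟨1, H.one_mem⟩]
  have : M.Normal :=
    NormalizerCondition.normal_of_coatom M Group.normalizerCondition_of_isNilpotent hM
  have hHM : H ⊔ M = ⊤ := top_le_iff.mp (hHK ▸ sup_le_sup_left hKM H)
  have hM_eq : ((H ⊓ M : Subgroup G) : Set G) * K = M := by
    rw [← coe_sup_eq_mul_of_mul_comm ((hproper M hM.1).mul_comm_of_le inf_le_right hKM),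
      sup_comm, ← sup_inf_assoc_of_le H hKM, sup_comm K, hHK, top_inf_eq]
  refine Set.eq_univ_of_univ_subset ?_
  calc Set.univ = (H : Set G) * (M : Set G) := by rw [← mul_normal, hHM, coe_top]
    _ = (H : Set G) * (((H ⊓ M : Subgroup G) : Set G) * (K : Set G)) := by rw [hM_eq]
    _ ⊆ (H : Set G) * ((H : Set G) * (K : Set G)) :=
      Set.mul_subset_mul_left (Set.mul_subset_mul_right inf_le_left)
    _ = (H : Set G) * (K : Set G) := by rw [← mul_assoc, coe_mul_coe]

theorem isIwasawa_of_forall_ne_top (hproper : ∀ M : Subgroup G, M ≠ ⊤ → IsIwasawa M) :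
    IsIwasawa G := by
  intro H K
  by_cases hHK : H ⊔ K = ⊤
  · rw [mul_eq_univ_of_sup_eq_top hproper hHK,
      mul_eq_univ_of_sup_eq_top hproper (sup_comm K H ▸ hHK)]
  · exact (hproper _ hHK).mul_comm_of_le le_sup_left le_sup_right

end

theorem isIwasawa_of_isNilpotent_of_isModularLattice {G : Type*} [Group G] [Finite G]
    [Group.IsNilpotent G] [IsModularLattice (Subgroup G)] : IsIwasawa G := by
  induction h : Nat.card G using Nat.strong_induction_on generalizing G with
  | _ n ih =>
    subst h
    refine isIwasawa_of_forall_ne_top fun M hM => ih _ ?_ rfl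
    exact (card_le_card_group M).lt_of_ne (mt (eq_top_of_card_eq M) hM)

theorem stmt_0 (G : Type*) [Group G] [Finite G] :
    IsIwasawa G ↔ Group.IsNilpotent G ∧ IsModularLattice (Subgroup G) :=
  ⟨fun h => ⟨h.isNilpotent, h.isModularLattice⟩,
    fun ⟨_, _⟩ => isIwasawa_of_isNilpotent_of_isModularLattice⟩
end

section
/- Every permutable subgroup of a finite group is a modular element of the subgroup lattice. -/
/-!
Permutability of `H` with `X` makes the join `X ⊔ H` equal to the product set `X * H`, since that
set is then closed under products and inverses. For `X ≤ Y`, Dedekind's law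
`X * H ∩ Y = X * (H ∩ Y)` then gives `(X ⊔ H) ⊓ Y ≤ X ⊔ (H ⊓ Y)`; the reverse inequality holds in
any lattice.
-/

open Subgroup Pointwise

namespace Permutable

variable {G : Type*} [Group G] {H : Subgroup G}

def mulSubgroup (hH : Permutable H) (K : Subgroup G) : Subgroup G where
  carrier := (K : Set G) * H
  one_mem' := ⟨1, K.one_mem, 1, H.one_mem, mul_one 1⟩
  mul_mem' {a b} ha hb := by
    have hab : a * b ∈ (K : Set G) * (H * K) * H := by
      simpa only [mul_assoc] using Set.mul_mem_mul ha hb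
    rwa [hH K, ← mul_assoc, coe_mul_coe, mul_assoc, coe_mul_coe] at hab
  inv_mem' {a} ha := by
    have ha' : a⁻¹ ∈ ((K : Set G) * H)⁻¹ := Set.inv_mem_inv.mpr ha
    rwa [mul_inv_rev, inv_coe_set, inv_coe_set, hH K] at ha'

theorem coe_sup_eq_mul (hH : Permutable H) (K : Subgroup G) :
    ((K ⊔ H : Subgroup G) : Set G) = K * H := by
  refine le_antisymm (?_ : K ⊔ H ≤ hH.mulSubgroup K) ?_
  · exact sup_le (fun k hk => ⟨k, hk, 1, H.one_mem, mul_one k⟩)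
      (fun h hh => ⟨1, K.one_mem, h, hh, one_mul h⟩)
  · rintro _ ⟨k, hk, h, hh, rfl⟩
    exact mul_mem_sup hk hh

end Permutable

theorem stmt_1_general (G : Type*) [Group G] (H : Subgroup G) (hH : Permutable H) :
    ∀ X Y : Subgroup G, X ≤ Y → X ⊔ (H ⊓ Y) = (X ⊔ H) ⊓ Y := by
  intro X Y hXY
  refine le_antisymm (sup_le (le_inf le_sup_left hXY) (inf_le_inf_right Y le_sup_right)) ?_
  have hcoe : (((X ⊔ H) ⊓ Y : Subgroup G) : Set G) = X * ↑(H ⊓ Y) := by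
    rw [coe_inf, hH.coe_sup_eq_mul, mul_inf_assoc X H Y hXY]
  intro g hg
  obtain ⟨x, hx, h, hh, rfl⟩ : g ∈ (X : Set G) * ↑(H ⊓ Y) := hcoe ▸ hg
  exact mul_mem_sup hx hh

theorem stmt_1 (G : Type*) [Group G] [Finite G] (H : Subgroup G) (hH : Permutable H) :
    ∀ X Y : Subgroup G, X ≤ Y → X ⊔ (H ⊓ Y) = (X ⊔ H) ⊓ Y :=
  stmt_1_general G H hH
end

section
/- In a Schmidt group G = PQ with normal Sylow p-subgroup P and cyclic Sylow q-subgroup Q = ⟨y⟩ of order q^n, the element y^q lies in the center of G. -/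
/-! Write `z = y ^ q`. If `Q` is normal, Schur–Zassenhaus gives a complement `K` of `Q`, and
`⟨z⟩` is normal in `G` along with `Q`. Otherwise the normalizer of `Q` is a proper, hence nilpotent,
subgroup in which the abelian Sylow subgroup `Q` is central, and Burnside's transfer theorem gives a
normal complement `K`. In both cases `K ⊔ ⟨z⟩` has order dividing `|K| |⟨z⟩| < |K| |Q| = |G|`, so it
is nilpotent and `⟨z⟩` is an abelian Sylow subgroup of it, hence central in it. Thus `z` commutes
with `K` and with `Q`, which generate `G`. -/

open Subgroup Pointwise

section

variable {G : Type*} [Group G]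

namespace Subgroup

theorem card_sup_dvd_card_mul_card_of_normal (H N : Subgroup G) [N.Normal] :
    Nat.card ↥(H ⊔ N) ∣ Nat.card H * Nat.card N := by
  have h := relIndex_mul_relIndex ⊥ N (H ⊔ N) bot_le le_sup_right
  rw [relIndex_bot_left, relIndex_bot_left, relIndex_sup_right] at h
  rw [← h, mul_comm]
  exact mul_dvd_mul_right (relIndex_dvd_card N H) _

theorem Normal.zpowers_pow {y : G} (h : (zpowers y).Normal) (k : ℕ) :
    (zpowers (y ^ k)).Normal := by
  refine ⟨fun x hx g => ?_⟩
  obtain ⟨j, rfl⟩ := mem_zpowers_iff.mp hx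
  obtain ⟨i, hi⟩ := mem_zpowers_iff.mp (h.conj_mem y (mem_zpowers y) g)
  refine mem_zpowers_iff.mpr ⟨i * j, ?_⟩
  rw [← zpow_natCast, ← zpow_mul, ← zpow_mul, ← conj_zpow, ← hi, ← zpow_mul]
  ring_nf

theorem eq_top_of_forall_sylow_le [Finite G] {H : Subgroup G}
    (h : ∀ (r : ℕ) [Fact r.Prime], ∃ R : Sylow r G, (R : Subgroup G) ≤ H) : H = ⊤ := by
  refine eq_top_of_card_eq H (Nat.dvd_antisymm (card_subgroup_dvd_card H) ?_)
  refine (Nat.factorization_prime_le_iff_dvd Nat.card_pos.ne' Nat.card_pos.ne').mp fun r hr => ?_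
  have := Fact.mk hr
  obtain ⟨R, hR⟩ := h r
  exact (hr.pow_dvd_iff_le_factorization Nat.card_pos.ne').mp
    (R.card_eq_multiplicity ▸ card_dvd_of_le hR)

end Subgroup

theorem Sylow.le_center_of_isMulCommutative [Finite G] [Group.IsNilpotent G] {q : ℕ}
    [Fact q.Prime] (S : Sylow q G) [IsMulCommutative S] : (S : Subgroup G) ≤ center G := by
  rw [← SetLike.coe_subset_coe, ← centralizer_eq_top_iff_subset]
  refine eq_top_of_forall_sylow_le fun r _ => ?_
  by_cases hrq : r = q
  · subst hrq
    exact ⟨S, le_centralizer (S : Subgroup G)⟩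
  · obtain ⟨R⟩ : Nonempty (Sylow r G) := inferInstance
    refine ⟨R, fun x hx => mem_centralizer_iff.mpr fun s hs => ?_⟩
    exact (commute_of_normal_of_disjoint _ _ inferInstance inferInstance
      (R.isPGroup'.disjoint_of_ne r q hrq _ _ S.isPGroup') x s hx hs).symm

theorem Subgroup.le_centralizer_of_isNilpotent [Finite G] {q : ℕ} [Fact q.Prime]
    {A M : Subgroup G} [IsMulCommutative A] (hAM : A ≤ M) (hM : Group.IsNilpotent M)
    (hA : IsPGroup q A) (hqA : ¬ q ∣ A.relIndex M) : M ≤ centralizer A := by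
  let S : Sylow q M := (hA.comap_subtype (K := M)).toSylow hqA
  have : IsMulCommutative S := inferInstanceAs (IsMulCommutative (A.subgroupOf M))
  intro g hg
  refine mem_centralizer_iff.mpr fun a ha => ?_
  have hcenter := mem_center_iff.mp (S.le_center_of_isMulCommutative
    (show (⟨a, hAM ha⟩ : M) ∈ S from ha)) ⟨g, hg⟩
  exact congrArg Subtype.val hcenter.symm

theorem orderOf_pow_lt_orderOf {x : G} {n : ℕ} (hx : orderOf x ≠ 0) (hn : 1 < n)
    (h : n ∣ orderOf x) : orderOf (x ^ n) < orderOf x := by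
  rw [orderOf_pow' x (by omega), Nat.gcd_eq_right h]
  exact Nat.div_lt_self (Nat.pos_of_ne_zero hx) hn

theorem Sylow.exists_isComplement'_and_normal_or_normal [Finite G] {q : ℕ} [Fact q.Prime]
    (hG : ∀ H : Subgroup G, H ≠ ⊤ → Group.IsNilpotent H) (Q : Sylow q G) [IsMulCommutative Q] :
    ∃ K : Subgroup G, K.IsComplement' Q ∧ (K.Normal ∨ (Q : Subgroup G).Normal) := by
  by_cases hQ : (Q : Subgroup G).Normal
  · obtain ⟨K, hK⟩ := exists_left_complement'_of_coprime Q.card_coprime_index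
    exact ⟨K, hK, Or.inr hQ⟩
  · have hN : normalizer ((Q : Subgroup G) : Set G) ≠ ⊤ := by rwa [ne_eq, normalizer_eq_top_iff]
    have hNC := le_centralizer_of_isNilpotent Q.le_normalizer (hG _ hN) Q.isPGroup'
      fun h => Q.not_dvd_index (h.trans (relIndex_dvd_index_of_le Q.le_normalizer))
    exact ⟨_, MonoidHom.ker_transferSylow_isComplement' Q hNC, Or.inl inferInstance⟩

theorem Subgroup.IsComplement'.le_center_of_isNilpotent_sup [Finite G] {q : ℕ} [Fact q.Prime]
    {K A : Subgroup G} {Q : Sylow q G} [IsMulCommutative Q] (hK : K.IsComplement' Q)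
    (hAQ : A ≤ Q) (hM : Group.IsNilpotent ↥(K ⊔ A))
    (hcard : Nat.card ↥(K ⊔ A) ∣ Nat.card K * Nat.card A) : A ≤ center G := by
  have hrel : A.relIndex (K ⊔ A) ∣ Nat.card K := by
    have h := relIndex_mul_relIndex ⊥ A (K ⊔ A) bot_le le_sup_right
    rw [relIndex_bot_left, relIndex_bot_left] at h
    rw [← h, mul_comm (Nat.card K)] at hcard
    exact Nat.dvd_of_mul_dvd_mul_left Nat.card_pos hcard
  have hQA : (Q : Subgroup G) ≤ centralizer A :=
    (le_centralizer (Q : Subgroup G)).trans (centralizer_le hAQ)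
  have : IsMulCommutative A := le_centralizer_iff_isMulCommutative.mp (hAQ.trans hQA)
  have hKA := le_centralizer_of_isNilpotent le_sup_right hM (Q.isPGroup'.to_le hAQ)
    fun h => Q.not_dvd_index (hK.index_eq_card ▸ h.trans hrel)
  have htop : centralizer (A : Set G) = ⊤ :=
    top_le_iff.mp (hK.sup_eq_top ▸ sup_le (le_sup_left.trans hKA) hQA)
  exact centralizer_eq_top_iff_subset.mp htop

theorem pow_mem_center_of_sylow_eq_zpowers [Finite G]
    (hG : ∀ H : Subgroup G, H ≠ ⊤ → Group.IsNilpotent H) {q : ℕ} [hq : Fact q.Prime]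
    (Q : Sylow q G) {y : G} (hQ : (Q : Subgroup G) = zpowers y) : y ^ q ∈ center G := by
  have hordQ : orderOf y = Nat.card Q := by rw [hQ, Nat.card_zpowers]
  rcases Q.isPGroup'.card_eq_or_dvd with hQ1 | hqQ
  · rw [orderOf_eq_one_iff.mp (hordQ.trans hQ1), one_pow]
    exact one_mem _
  have : IsMulCommutative (Q : Subgroup G) := by rw [hQ]; infer_instance
  obtain ⟨K, hK, hnormal⟩ := Q.exists_isComplement'_and_normal_or_normal hG
  have hAQ : zpowers (y ^ q) ≤ Q := zpowers_le.mpr (pow_mem (hQ ▸ mem_zpowers y) q)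
  have hcard : Nat.card ↥(K ⊔ zpowers (y ^ q)) ∣ Nat.card K * Nat.card (zpowers (y ^ q)) := by
    rcases hnormal with hKn | hQn
    · rw [sup_comm, mul_comm]
      exact card_sup_dvd_card_mul_card_of_normal _ K
    · have := (hQ ▸ hQn : (zpowers y).Normal).zpowers_pow q
      exact card_sup_dvd_card_mul_card_of_normal K _
  have hlt : Nat.card (zpowers (y ^ q)) < Nat.card Q := by
    rw [Nat.card_zpowers, ← hordQ]
    exact orderOf_pow_lt_orderOf (hordQ ▸ Nat.card_pos.ne') hq.out.one_lt (hordQ ▸ hqQ)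
  have hM : K ⊔ zpowers (y ^ q) ≠ ⊤ := by
    intro htop
    have hle := Nat.le_of_dvd (Nat.mul_pos Nat.card_pos Nat.card_pos) hcard
    rw [htop, card_top, ← hK.card_mul_card] at hle
    exact (Nat.mul_lt_mul_left Nat.card_pos).mpr hlt |>.not_ge hle
  exact hK.le_center_of_isNilpotent_sup hAQ (hG _ hM) hcard (mem_zpowers _)

end

theorem stmt_6_general (G : Type*) [Group G] [Finite G] (hS : IsSchmidt G)
    (q : ℕ) (hq : q.Prime)
    (Q : Sylow q G) (y : G) (hQ : (Q : Subgroup G) = Subgroup.zpowers y) :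
    y ^ q ∈ Subgroup.center G := by
  have := Fact.mk hq
  exact pow_mem_center_of_sylow_eq_zpowers hS.2 Q hQ

theorem stmt_6 (G : Type*) [Group G] [Finite G] (hS : IsSchmidt G)
    (p q n : ℕ) (hp : p.Prime) (hq : q.Prime) (hpq : p ≠ q)
    (P : Sylow p G) (hP : (P : Subgroup G).Normal)
    (Q : Sylow q G) (y : G) (hQ : (Q : Subgroup G) = Subgroup.zpowers y)
    (hy : orderOf y = q ^ n) :
    y ^ q ∈ Subgroup.center G :=
  stmt_6_general G hS q hq Q y hQ
end

section
/- If G is a Schmidt group with abelian normal Sylow p-subgroup P elementary abelian of order p^r with r > 1, and Q of order q, then the subgroup lattice of G contains a pentagon (five subgroups forming a sublattice isomorphic to N_5), so L(G) is not modular. -/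
open Subgroup Pointwise

/-!
The pentagon is `⊥ < A < P < G` together with `Q`, where `A` is any nontrivial proper subgroup of
`P` (a cyclic one, of order `p < p ^ r`). The only nontrivial point is `A ⊔ Q = G`: since `P` is
abelian and normal, `P ⊓ (A ⊔ Q)` is normalized by both `P` and `A ⊔ Q`, hence normal in
`P ⊔ Q = G`; it contains `A ≠ ⊥`, so minimality of `P` forces `P ≤ A ⊔ Q`.
-/

section Lattice

variable {α : Type*} [Lattice α]

theorem pentagon_of_inf_eq_of_sup_eq {z a b c t : α} (hza : z < a) (hab : a < b) (hzc : z < c)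
    (hbc : b ⊓ c = z) (hbct : b ⊔ c = t) (hact : a ⊔ c = t) :
    z < a ∧ a < b ∧ b < t ∧ z < c ∧ c < t ∧
      a ⊓ c = z ∧ b ⊓ c = z ∧ a ⊔ c = t ∧ b ⊔ c = t := by
  have hbt : b < t := hbct ▸ left_lt_sup.mpr fun hcb =>
    hzc.ne (hbc.symm.trans (inf_eq_right.mpr hcb))
  have hct : c < t := hbct ▸ right_lt_sup.mpr fun hbc' =>
    (hza.trans hab).ne' ((inf_eq_left.mpr hbc').symm.trans hbc)
  have hac : a ⊓ c = z :=
    le_antisymm (hbc ▸ inf_le_inf_right c hab.le) (le_inf hza.le hzc.le)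
  exact ⟨hza, hab, hbt, hzc, hct, hac, hbc, hact, hbct⟩

theorem not_isModularLattice_of_lt_of_sup_eq {a b c : α} (hab : a < b) (hinf : b ⊓ c ≤ a)
    (hsup : a ⊔ c = b ⊔ c) : ¬ IsModularLattice α := by
  intro _
  have hmod := sup_inf_assoc_of_le c hab.le
  rw [hsup, inf_eq_right.mpr le_sup_left, inf_comm, sup_eq_left.mpr hinf] at hmod
  exact hab.ne hmod.symm

end Lattice

section Group

variable {G : Type*} [Group G]

theorem exists_bot_lt_lt_of_forall_pow_eq_one {P : Subgroup G} {p : ℕ} (hp : 0 < p)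
    (hPp : ∀ x ∈ P, x ^ p = 1) (hcard : p < Nat.card P) : ∃ A : Subgroup G, ⊥ < A ∧ A < P := by
  have hP : P ≠ ⊥ := by
    rintro rfl
    rw [card_bot] at hcard
    omega
  obtain ⟨⟨x, hxP⟩, hx⟩ := ne_bot_iff_exists_ne_one.mp hP
  refine ⟨zpowers x, bot_lt_iff_ne_bot.mpr (zpowers_eq_bot.not.mpr ?_),
    (zpowers_le.mpr hxP).lt_of_ne ?_⟩
  · simpa using hx
  · intro hxP_eq
    have hord := orderOf_le_of_pow_eq_one hp (hPp x hxP)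
    rw [← Nat.card_zpowers, hxP_eq] at hord
    omega

theorem Subgroup.Normal.inf_normal_of_le_centralizer {P K : Subgroup G} (hPn : P.Normal)
    (hPc : P ≤ centralizer P) (hPK : P ⊔ K = ⊤) : (P ⊓ K).Normal := by
  rw [← normalizer_eq_top_iff, eq_top_iff, ← hPK]
  refine sup_le ?_ ?_
  · exact hPc.trans ((centralizer_le inf_le_left).trans (centralizer_le_normalizer _))
  · exact normal_subgroupOf_iff_le_normalizer_inf.mp (hPn.subgroupOf K)

theorem sup_eq_top_of_minimal_normal {P A Q : Subgroup G} (hPn : P.Normal)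
    (hPc : P ≤ centralizer P) (hPmin : ∀ N : Subgroup G, N.Normal → N < P → N = ⊥)
    (hPQ : P ⊔ Q = ⊤) (hA : ⊥ < A) (hAP : A ≤ P) : A ⊔ Q = ⊤ := by
  have hPK : P ⊔ (A ⊔ Q) = ⊤ := top_le_iff.mp (hPQ ▸ sup_le_sup_left le_sup_right P)
  have hP_le : P ≤ A ⊔ Q := by
    by_contra hP
    have hbot : P ⊓ (A ⊔ Q) = ⊥ :=
      hPmin _ (hPn.inf_normal_of_le_centralizer hPc hPK)
        (inf_le_left.lt_of_ne fun h => hP (inf_eq_left.mp h))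
    exact hA.ne' (le_bot_iff.mp (hbot ▸ le_inf hAP le_sup_left))
  exact top_le_iff.mp (hPQ ▸ sup_le hP_le le_sup_right)

end Group

theorem stmt_15_general (G : Type*) [Group G]
    (p q r : ℕ) (hp : p.Prime) (hq : q.Prime) (hr : 1 < r)
    (P Q : Subgroup G) (hPn : P.Normal)
    (hPel : ∀ x ∈ P, x ^ p = 1) (hPab : ∀ x ∈ P, ∀ z ∈ P, x * z = z * x)
    (hPcard : Nat.card ↥P = p ^ r)
    (hPmin : ∀ N : Subgroup G, N.Normal → N < P → N = ⊥)
    (hQcard : Nat.card ↥Q = q)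
    (hinf : P ⊓ Q = ⊥) (hsup : P ⊔ Q = ⊤) :
    (∃ z a b c t : Subgroup G, z < a ∧ a < b ∧ b < t ∧ z < c ∧ c < t ∧
      a ⊓ c = z ∧ b ⊓ c = z ∧ a ⊔ c = t ∧ b ⊔ c = t) ∧
    ¬ IsModularLattice (Subgroup G) := by
  have hp_lt : p < Nat.card P :=
    hPcard ▸ (pow_one p).symm.trans_lt (Nat.pow_lt_pow_right hp.one_lt hr)
  obtain ⟨A, hA, hAP⟩ := exists_bot_lt_lt_of_forall_pow_eq_one hp.pos hPel hp_lt
  have hQ : ⊥ < Q := bot_lt_iff_ne_bot.mpr fun h => hq.one_lt.ne' (by rw [← hQcard, h, card_bot])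
  have hAQ : A ⊔ Q = ⊤ :=
    sup_eq_top_of_minimal_normal hPn (fun x hx y hy => hPab y hy x hx) hPmin hsup hA hAP.le
  exact ⟨⟨⊥, A, P, Q, ⊤, pentagon_of_inf_eq_of_sup_eq hA hAP hQ hinf hsup hAQ⟩,
    not_isModularLattice_of_lt_of_sup_eq hAP (hinf.trans_le bot_le) (hAQ.trans hsup.symm)⟩

theorem stmt_15 (G : Type*) [Group G] [Finite G] (hS : IsSchmidt G)
    (p q r : ℕ) (hp : p.Prime) (hq : q.Prime) (hpq : p ≠ q) (hr : 1 < r)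
    (P Q : Subgroup G) (hPn : P.Normal)
    (hPel : ∀ x ∈ P, x ^ p = 1) (hPab : ∀ x ∈ P, ∀ z ∈ P, x * z = z * x)
    (hPcard : Nat.card ↥P = p ^ r)
    (hPmin : ∀ N : Subgroup G, N.Normal → N < P → N = ⊥)
    (hQcard : Nat.card ↥Q = q)
    (hinf : P ⊓ Q = ⊥) (hsup : P ⊔ Q = ⊤) :
    (∃ z a b c t : Subgroup G, z < a ∧ a < b ∧ b < t ∧ z < c ∧ c < t ∧
      a ⊓ c = z ∧ b ⊓ c = z ∧ a ⊔ c = t ∧ b ⊔ c = t) ∧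
    ¬ IsModularLattice (Subgroup G) :=
  stmt_15_general G p q r hp hq hr P Q hPn hPel hPab hPcard hPmin hQcard hinf hsup
end
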